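/- Let 0<q<1 and w∈ℂ∖{0}. For every s∈ℂ with Re(s)>0, ζ_D(s) = 4·((1−q²)/|w|)^s · Σ_{n=0}^∞ (Γ(s+n)/(n!·Γ(s))) · q^{2n}/(1−q^{s+2n})², where Γ(s+n)/Γ(s) = ∏_{j=0}^{n-1}(s+j) is the rising factorial, and the series on the right converges absolutely. -/

import Mathlib

/-!
Since `[m+1]_q = q^{-m} (1 - q^{2(m+1)}) / (1 - q²)`, the `m`-th term of `ζ_D(s)` is
`4 ((1-q²)/|w|)^s (m+1) q^{ms} (1 - q^{2(m+1)})^{-s}`. Expanding `(1 - q^{2(m+1)})^{-s}` by the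
binomial series in powers `q^{2(m+1)k}` gives an absolutely convergent double series over
`(m, k)`; summing it over `m` first, with `∑ (m+1) r^m = 1/(1-r)²` at `r = q^{s+2k}`, gives the
right-hand side.
-/

open Complex Real

/-- The q-number `[n]_q = (q^{-n} - q^n)/(q^{-1} - q)`. -/
noncomputable def qnum (q : ℝ) (n : ℕ) : ℝ :=
  (q ^ (-(n : ℤ)) - q ^ (n : ℤ)) / (q ^ (-1 : ℤ) - q)

open Finset

theorem ascPochhammer_eval_eq_prod_range {R : Type*} [CommSemiring R] (n : ℕ) (r : R) :
    (ascPochhammer R n).eval r = ∏ j ∈ range n, (r + j) := by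
  induction n with
  | zero => simp
  | succ n ih => rw [ascPochhammer_succ_eval, ih, prod_range_succ]

theorem Ring.choose_add_sub_one_eq_prod_div {K : Type*} [Field K] [CharZero K] (a : K) (n : ℕ) :
    Ring.choose (a + n - 1) n = (∏ j ∈ range n, (a + j)) / n.factorial := by
  rw [Ring.choose_eq_smul, Polynomial.descPochhammer_smeval_eq_ascPochhammer,
    show a + n - 1 - n + 1 = a by ring, Polynomial.ascPochhammer_smeval_eq_eval,
    ascPochhammer_eval_eq_prod_range, smul_eq_mul, inv_mul_eq_div]

noncomputable def pochhammerCoeff (s : ℂ) (n : ℕ) : ℂ :=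
  (∏ j ∈ range n, (s + j)) / n.factorial

theorem enorm_lt_one_of_norm_lt_one {E : Type*} [SeminormedAddGroup E] {x : E} (hx : ‖x‖ < 1) :
    ‖x‖ₑ < 1 := by
  rwa [← ENNReal.coe_one, enorm_lt_coe, ← NNReal.coe_lt_coe, coe_nnnorm]

theorem hasSum_pochhammerCoeff_mul_pow (s : ℂ) {x : ℂ} (hx : ‖x‖ < 1) :
    HasSum (fun n ↦ pochhammerCoeff s n * x ^ n) ((1 - x) ^ (-s)) := by
  have h := (one_div_one_sub_cpow_hasFPowerSeriesOnBall_zero s).hasSum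
    (y := x) (by simpa using enorm_lt_one_of_norm_lt_one hx)
  simp only [FormalMultilinearSeries.ofScalars_apply_eq, smul_eq_mul, zero_add, one_div] at h
  rw [cpow_neg]
  refine h.congr_fun fun n ↦ ?_
  rw [pochhammerCoeff, ← Ring.choose_add_sub_one_eq_prod_div, mul_comm]

theorem summable_norm_pochhammerCoeff_mul_pow (s : ℂ) {r : ℝ} (hr0 : 0 ≤ r) (hr : r < 1) :
    Summable fun n ↦ ‖pochhammerCoeff s n‖ * r ^ n := by
  lift r to NNReal using hr0
  set p := FormalMultilinearSeries.ofScalars ℂ fun n ↦ Ring.choose (s + n - 1) n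
  have hp : (r : ENNReal) < p.radius :=
    lt_of_lt_of_le (by simpa using hr) (one_div_one_sub_cpow_hasFPowerSeriesOnBall_zero s).r_le
  convert p.summable_norm_mul_pow hp using 2 with n
  rw [FormalMultilinearSeries.ofScalars_norm, pochhammerCoeff, Ring.choose_add_sub_one_eq_prod_div]

theorem hasSum_add_one_mul_pow {r : ℂ} (hr : ‖r‖ < 1) :
    HasSum (fun m : ℕ ↦ ((m : ℂ) + 1) * r ^ m) (1 / (1 - r) ^ 2) := by
  have h := one_div_one_sub_sq_hasFPowerSeriesOnBall_zero.hasSum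
    (y := r) (by simpa using enorm_lt_one_of_norm_lt_one hr)
  simp only [FormalMultilinearSeries.ofScalars_apply_eq, smul_eq_mul, zero_add] at h
  simpa only [mul_comm] using h

theorem qnum_succ {q : ℝ} (hq : q ≠ 0) (m : ℕ) :
    qnum q (m + 1) = (1 - q ^ (2 * (m + 1))) / ((1 - q ^ 2) * q ^ m) := by
  have hden : q⁻¹ - q = (1 - q ^ 2) / q := by field_simp
  rw [qnum, zpow_neg, zpow_neg, zpow_one, zpow_natCast, hden, div_div_eq_mul_div,
    mul_comm (1 - q ^ 2), ← div_div]
  congr 1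
  field_simp
  ring

theorem Complex.ofReal_inv_cpow_neg {a : ℝ} (ha : 0 ≤ a) (s : ℂ) :
    ((a⁻¹ : ℝ) : ℂ) ^ (-s) = (a : ℂ) ^ s := by
  rw [ofReal_inv, inv_cpow_ofReal_nonneg ha, cpow_neg, inv_inv]

theorem Complex.ofReal_pow_cpow {a : ℝ} (ha : 0 ≤ a) (m : ℕ) (s : ℂ) :
    ((a ^ m : ℝ) : ℂ) ^ s = ((a : ℂ) ^ s) ^ m := by
  have harg : (a : ℂ).arg = 0 := arg_ofReal_of_nonneg ha
  rw [ofReal_pow, ← cpow_nat_mul' (by simp [harg, pi_pos]) (by simp [harg, pi_pos.le]),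
    cpow_nat_mul]

theorem ofReal_mul_qnum_succ_cpow_neg {q c : ℝ} (hq : 0 < q) (hq1 : q < 1) (hc : 0 < c)
    (s : ℂ) (m : ℕ) :
    ((c * qnum q (m + 1) : ℝ) : ℂ) ^ (-s) =
      (((1 - q ^ 2) / c : ℝ) : ℂ) ^ s * ((q : ℂ) ^ s) ^ m *
        (1 - ((q : ℂ) ^ 2) ^ (m + 1)) ^ (-s) := by
  have hq2 : 0 < 1 - q ^ 2 := by nlinarith
  have hqm : 0 < 1 - q ^ (2 * (m + 1)) := sub_pos.2 (pow_lt_one₀ hq.le hq1 (by omega))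
  have hsplit : c * qnum q (m + 1) =
      ((1 - q ^ 2) / c)⁻¹ * ((q ^ m)⁻¹ * (1 - q ^ (2 * (m + 1)))) := by
    rw [qnum_succ hq.ne']
    field_simp
  rw [hsplit, ofReal_mul, mul_cpow_ofReal_nonneg (by positivity) (by positivity),
    ofReal_mul, mul_cpow_ofReal_nonneg (by positivity) hqm.le,
    ofReal_inv_cpow_neg (by positivity), ofReal_inv_cpow_neg (by positivity),
    ofReal_pow_cpow hq.le, pow_mul]
  push_cast
  ring

noncomputable def doubleSeriesTerm (s e x : ℂ) (p : ℕ × ℕ) : ℂ :=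
  ((p.1 : ℂ) + 1) * e ^ p.1 * (pochhammerCoeff s p.2 * (x ^ (p.1 + 1)) ^ p.2)

section DoubleSeries

variable {e x : ℂ} (s : ℂ)

theorem summable_norm_doubleSeriesTerm (he : ‖e‖ < 1) (hx : ‖x‖ < 1) :
    Summable fun p ↦ ‖doubleSeriesTerm s e x p‖ := by
  have hrow : Summable fun m : ℕ ↦ ((m : ℝ) + 1) * ‖e‖ ^ m := by
    simpa [add_mul] using (summable_pow_mul_geometric_of_norm_lt_one 1 (by simpa using he)).add
      (summable_geometric_of_lt_one (norm_nonneg e) he)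
  have hcol := summable_norm_pochhammerCoeff_mul_pow s (norm_nonneg x) hx
  refine .of_nonneg_of_le (fun _ ↦ norm_nonneg _) (fun ⟨m, n⟩ ↦ ?_)
    (hrow.mul_of_nonneg hcol (fun _ ↦ by positivity) (fun _ ↦ by positivity))
  have hpow : ‖x‖ ^ ((m + 1) * n) ≤ ‖x‖ ^ n :=
    pow_le_pow_of_le_one (norm_nonneg x) hx.le (Nat.le_mul_of_pos_left n m.succ_pos)
  simp only [doubleSeriesTerm, norm_mul, norm_pow, ← pow_mul]
  rw [show ‖(m : ℂ) + 1‖ = (m : ℝ) + 1 by norm_cast]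
  gcongr

theorem hasSum_doubleSeriesTerm_row (hx : ‖x‖ < 1) (m : ℕ) :
    HasSum (fun n ↦ doubleSeriesTerm s e x (m, n))
      (((m : ℂ) + 1) * e ^ m * (1 - x ^ (m + 1)) ^ (-s)) := by
  have hxm : ‖x ^ (m + 1)‖ < 1 := by
    rw [norm_pow]; exact pow_lt_one₀ (norm_nonneg x) hx m.succ_ne_zero
  exact (hasSum_pochhammerCoeff_mul_pow s hxm).mul_left (((m : ℂ) + 1) * e ^ m)

theorem hasSum_doubleSeriesTerm_column (he : ‖e‖ < 1) (hx : ‖x‖ < 1) (n : ℕ) :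
    HasSum (fun m ↦ doubleSeriesTerm s e x (m, n))
      (pochhammerCoeff s n * (x ^ n / (1 - e * x ^ n) ^ 2)) := by
  have hexn : ‖e * x ^ n‖ < 1 := by
    rw [norm_mul, norm_pow]
    exact mul_lt_one_of_nonneg_of_lt_one_left (norm_nonneg e) he
      (pow_le_one₀ (norm_nonneg x) hx.le)
  rw [show pochhammerCoeff s n * (x ^ n / (1 - e * x ^ n) ^ 2) =
      pochhammerCoeff s n * x ^ n * (1 / (1 - e * x ^ n) ^ 2) by ring]
  refine ((hasSum_add_one_mul_pow hexn).mul_left _).congr_fun fun m ↦ ?_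
  simp only [doubleSeriesTerm, ← pow_mul, mul_pow]
  ring

theorem summable_norm_pochhammerCoeff_mul_div_one_sub_sq (he : ‖e‖ < 1) (hx : ‖x‖ < 1) :
    Summable fun n ↦ ‖pochhammerCoeff s n * (x ^ n / (1 - e * x ^ n) ^ 2)‖ := by
  have hF := summable_norm_doubleSeriesTerm s he hx
  refine .of_nonneg_of_le (fun _ ↦ norm_nonneg _) (fun n ↦ ?_) hF.prod_symm.prod
  rw [← (hasSum_doubleSeriesTerm_column s he hx n).tsum_eq]
  exact norm_tsum_le_tsum_norm (hF.prod_symm.prod_factor n)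

theorem tsum_add_one_mul_pow_mul_one_sub_pow_cpow_neg (he : ‖e‖ < 1) (hx : ‖x‖ < 1) :
    ∑' m : ℕ, ((m : ℂ) + 1) * e ^ m * (1 - x ^ (m + 1)) ^ (-s) =
      ∑' n : ℕ, pochhammerCoeff s n * (x ^ n / (1 - e * x ^ n) ^ 2) := by
  have hF := (summable_norm_doubleSeriesTerm s he hx).of_norm
  rw [(hF.hasSum.prod_fiberwise (hasSum_doubleSeriesTerm_row s hx)).tsum_eq,
    (hF.prod_symm.hasSum.prod_fiberwise (hasSum_doubleSeriesTerm_column s he hx)).tsum_eq,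
    ← (Equiv.prodComm ℕ ℕ).tsum_eq]
  rfl

end DoubleSeries

theorem Complex.ofReal_cpow_add_two_mul {q : ℝ} (hq : 0 < q) (s : ℂ) (n : ℕ) :
    (q : ℂ) ^ (s + 2 * (n : ℂ)) = (q : ℂ) ^ s * ((q : ℂ) ^ 2) ^ n := by
  rw [cpow_add _ _ (ofReal_ne_zero.2 hq.ne'), ← pow_mul, ← cpow_natCast, Nat.cast_mul,
    Nat.cast_ofNat]

/-- for `Re s > 0`,
`ζ_D(s) = 4 ((1-q²)/|w|)^s · Σ_{n≥0} (Γ(s+n)/(n! Γ(s))) · q^{2n}/(1-q^{s+2n})²`,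
where `Γ(s+n)/Γ(s) = ∏_{j<n}(s+j)` is the rising factorial, the right-hand series
converging absolutely. -/
theorem podles_zeta_meromorphic_form (q : ℝ) (hq : 0 < q) (hq1 : q < 1)
    (w : ℂ) (hw : w ≠ 0) (s : ℂ) (hs : 0 < s.re) :
    Summable (fun n : ℕ =>
      ‖(∏ j ∈ Finset.range n, (s + (j : ℂ))) / (n.factorial : ℂ) *
        ((q : ℂ) ^ (2 * n) / (1 - (q : ℂ) ^ (s + 2 * (n : ℂ))) ^ 2)‖) ∧
    (∑' n : ℕ, 4 * ((n : ℂ) + 1) * ((‖w‖ * qnum q (n + 1) : ℝ) : ℂ) ^ (-s))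
      = 4 * (((1 - q ^ 2) / ‖w‖ : ℝ) : ℂ) ^ s *
        ∑' n : ℕ, (∏ j ∈ Finset.range n, (s + (j : ℂ))) / (n.factorial : ℂ) *
          ((q : ℂ) ^ (2 * n) / (1 - (q : ℂ) ^ (s + 2 * (n : ℂ))) ^ 2) := by
  have he : ‖(q : ℂ) ^ s‖ < 1 := by
    rw [norm_cpow_eq_rpow_re_of_pos hq]
    exact Real.rpow_lt_one hq.le hq1 hs
  have hx : ‖(q : ℂ) ^ 2‖ < 1 := by
    rw [norm_pow, norm_real, norm_of_nonneg hq.le]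
    exact pow_lt_one₀ hq.le hq1 two_ne_zero
  have hterm (n : ℕ) : (q : ℂ) ^ (2 * n) / (1 - (q : ℂ) ^ (s + 2 * (n : ℂ))) ^ 2 =
      ((q : ℂ) ^ 2) ^ n / (1 - (q : ℂ) ^ s * ((q : ℂ) ^ 2) ^ n) ^ 2 := by
    rw [pow_mul, ofReal_cpow_add_two_mul hq]
  simp only [hterm]
  refine ⟨summable_norm_pochhammerCoeff_mul_div_one_sub_sq s he hx, ?_⟩
  calc ∑' n : ℕ, 4 * ((n : ℂ) + 1) * ((‖w‖ * qnum q (n + 1) : ℝ) : ℂ) ^ (-s)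
      = ∑' m : ℕ, 4 * (((1 - q ^ 2) / ‖w‖ : ℝ) : ℂ) ^ s *
          (((m : ℂ) + 1) * ((q : ℂ) ^ s) ^ m * (1 - ((q : ℂ) ^ 2) ^ (m + 1)) ^ (-s)) := by
        congr 1 with m
        rw [ofReal_mul_qnum_succ_cpow_neg hq hq1 (norm_pos_iff.2 hw)]
        ring
    _ = _ := by
        rw [tsum_mul_left, tsum_add_one_mul_pow_mul_one_sub_pow_cpow_neg s he hx]
        rfl
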